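/- Coercivity of the homogenized elasticity tensor A₀ˢ (claim in Lemma 5.7 via identity (5.31)): Let Y = (0,1)³, let Y_s ⊆ Y be measurable with Lebesgue measure |Y_s|, and let κ ≥ 0. For each pair i,j ∈ {1,2,3} let U^{ij} : ℝ³ → ℝ³ be continuously differentiable with U^{ij} = U^{ji}, and let Π^{ij} : Y → ℝ be square-integrable with Π^{ij} = Π^{ji}. Assume that for all i,j,k,l: ∫_{Y_s} D(U^{ij}) : J^{kl} dy = − ∫_{Y_s} D(U^{ij}) : D(U^{kl}) dy − κ ∫_{Y_s} Π^{ij} Π^{kl} dy. Define, for each symmetric 3×3 matrix ζ, A₀(ζ) := ζ + Σ_{i,j} ζ_{ij} ∫_{Y_s} D(U^{ij}) dy, and set Z_ζ := Σ_{i,j} ζ_{ij} U^{ij} and Π_ζ := Σ_{i,j} ζ_{ij} Π^{ij}. Then for every symmetric 3×3 matrix ζ: A₀(ζ) : ζ = (1 − |Y_s|) (ζ : ζ) + ∫_{Y_s} | D(Z_ζ)(y) + ζ |² dy + κ ∫_{Y_s} Π_ζ(y)² dy. In particular, if |Y_s| < 1 then A₀(ζ) : ζ ≥ (1 − |Y_s|)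 (ζ : ζ), so A₀ is strictly positive definite on symmetric matrices. -/

import Mathlib

/-!
Summing the cell identities (5.31) against the weights `ζ_{ij} ζ_{kl}` and writing a symmetric `ζ`
as `Σ_{k,l} ζ_{kl} J^{kl}` gives `∫_{Ys} D(Z_ζ) : ζ = -∫_{Ys} |D(Z_ζ)|² - κ ∫_{Ys} Π_ζ²`.
Since `A₀(ζ) = ζ + ∫_{Ys} D(Z_ζ)`, expanding `|D(Z_ζ) + ζ|²` turns `A₀(ζ) : ζ` into the claimed
sum of `(1 - |Ys|) ζ : ζ` and two nonnegative integrals.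
-/

open MeasureTheory Filter Topology

noncomputable section

/-- The spatial variable lives in `ℝ³`, modeled as `Fin 3 → ℝ`. -/
abbrev X3 := Fin 3 → ℝ

/-- The open unit cell `Y = (0,1)³`. -/
def cubeO : Set X3 := {x | ∀ i, x i ∈ Set.Ioo (0 : ℝ) 1}

/-- The entries of the symmetrized gradient `D(U) = (∇U + (∇U)ᵀ)/2`. -/
def symGrad (U : X3 → X3) (y : X3) (p q : Fin 3) : ℝ :=
  (1 / 2) * (fderiv ℝ (fun z => U z p) y (Pi.single q 1) +
    fderiv ℝ (fun z => U z q) y (Pi.single p 1))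

/-- The matrix `J^{kl} = (1/2)(e_k ⊗ e_l + e_l ⊗ e_k)`. -/
def Jmat (k l : Fin 3) (p q : Fin 3) : ℝ :=
  (1 / 2) * ((if p = k ∧ q = l then (1 : ℝ) else 0) +
    (if p = l ∧ q = k then (1 : ℝ) else 0))

/-- The Frobenius inner product `A : B = Σ_{p,q} A_{pq} B_{pq}` of 3×3 matrices. -/
def matInner (A B : Fin 3 → Fin 3 → ℝ) : ℝ := ∑ p, ∑ q, A p q * B p q

open Finset

def matInnerₗ : (Fin 3 → Fin 3 → ℝ) →ₗ[ℝ] (Fin 3 → Fin 3 → ℝ) →ₗ[ℝ] ℝ :=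
  LinearMap.mk₂ ℝ matInner
    (fun A B C => by simp only [matInner, Pi.add_apply, add_mul, sum_add_distrib])
    (fun c A B => by simp only [matInner, Pi.smul_apply, smul_eq_mul, mul_assoc, mul_sum])
    (fun A B C => by simp only [matInner, Pi.add_apply, mul_add, sum_add_distrib])
    (fun c A B => by simp only [matInner, Pi.smul_apply, smul_eq_mul, mul_left_comm, mul_sum])

@[simp] lemma matInnerₗ_apply (A B : Fin 3 → Fin 3 → ℝ) : matInnerₗ A B = matInner A B := rfl

lemma matInner_comm (A B : Fin 3 → Fin 3 → ℝ) : matInner A B = matInner B A := by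
  simp only [matInner, mul_comm]

lemma matInner_self_nonneg (A : Fin 3 → Fin 3 → ℝ) : 0 ≤ matInner A A :=
  sum_nonneg fun _ _ => sum_nonneg fun _ _ => mul_self_nonneg _

lemma matInner_add_left (A B C : Fin 3 → Fin 3 → ℝ) :
    matInner (A + B) C = matInner A C + matInner B C :=
  LinearMap.map_add₂ matInnerₗ A B C

lemma matInner_add_right (A B C : Fin 3 → Fin 3 → ℝ) :
    matInner A (B + C) = matInner A B + matInner A C :=
  (matInnerₗ A).map_add B C

lemma matInner_add_self (A B : Fin 3 → Fin 3 → ℝ) :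
    matInner (A + B) (A + B) = matInner A A + 2 * matInner A B + matInner B B := by
  rw [matInner_add_left, matInner_add_right, matInner_add_right, matInner_comm B A]
  ring

lemma sum_smul_Jmat {ζ : Fin 3 → Fin 3 → ℝ} (hζ : ∀ p q, ζ p q = ζ q p) :
    ∑ k, ∑ l, ζ k l • Jmat k l = ζ := by
  ext p q
  simp only [Finset.sum_apply, Pi.smul_apply, Jmat, ite_and, mul_add, mul_ite, mul_one, mul_zero,
    smul_eq_mul, sum_add_distrib, sum_ite_irrel, sum_ite_eq, mem_univ, if_true, sum_const_zero]
  rw [hζ q p]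
  ring

lemma LinearMap.map₂_sum_sum_smul {R M N ι : Type*} [CommSemiring R] [AddCommMonoid M] [Module R M]
    [AddCommMonoid N] [Module R N] [Fintype ι] (B : M →ₗ[R] N →ₗ[R] R) (ζ : ι → ι → R)
    (x : ι → ι → M) (y : ι → ι → N) :
    B (∑ i, ∑ j, ζ i j • x i j) (∑ k, ∑ l, ζ k l • y k l) =
      ∑ i, ∑ j, ζ i j * ∑ k, ∑ l, ζ k l * B (x i j) (y k l) := by
  simp_rw [map_sum B, map_smul B, LinearMap.sum_apply, LinearMap.smul_apply, map_sum, map_smul,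
    smul_eq_mul]

/-- The field `Z_ζ = Σ_{i,j} ζ_{ij} U^{ij}`. -/
def weightedSum {ι : Type*} [Fintype ι] (ζ : ι → ι → ℝ) (V : ι → ι → X3 → X3) : X3 → X3 :=
  fun z r => ∑ i, ∑ j, ζ i j * V i j z r

lemma contDiff_weightedSum {ι : Type*} [Fintype ι] (ζ : ι → ι → ℝ) {V : ι → ι → X3 → X3}
    (hV : ∀ i j, ContDiff ℝ 1 (V i j)) : ContDiff ℝ 1 (weightedSum ζ V) :=
  contDiff_pi.mpr fun r => ContDiff.sum fun i _ => ContDiff.sum fun j _ =>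
    (contDiff_pi.mp (hV i j) r).const_smul (ζ i j)

lemma symGrad_weightedSum {ι : Type*} [Fintype ι] (ζ : ι → ι → ℝ) {V : ι → ι → X3 → X3}
    (hV : ∀ i j, Differentiable ℝ (V i j)) (y : X3) :
    symGrad (weightedSum ζ V) y = ∑ i, ∑ j, ζ i j • symGrad (V i j) y := by
  have hderiv : ∀ r, fderiv ℝ (fun z => ∑ i, ∑ j, ζ i j * V i j z r) y =
      ∑ i, ∑ j, ζ i j • fderiv ℝ (fun z => V i j z r) y := fun r =>
    (HasFDerivAt.fun_sum fun i _ => HasFDerivAt.fun_sum fun j _ =>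
      ((differentiable_pi.mp (hV i j) r) y).hasFDerivAt.const_mul (ζ i j)).fderiv
  ext p q
  simp only [symGrad, weightedSum, hderiv, Finset.sum_apply, Pi.smul_apply, FunLike.coe_sum,
    FunLike.coe_smul, smul_eq_mul, ← sum_add_distrib, mul_sum, mul_add, mul_left_comm]

lemma continuous_symGrad {V : X3 → X3} (hV : ContDiff ℝ 1 V) : Continuous (symGrad V) := by
  have hfderiv : ∀ r s, Continuous fun y => fderiv ℝ (fun z => V z r) y (Pi.single s 1) :=
    fun r s => (((contDiff_pi.mp hV r).continuous_fderiv one_ne_zero).clm_apply continuous_const)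
  exact continuous_pi fun p => continuous_pi fun q =>
    continuous_const.mul ((hfderiv p q).add (hfderiv q p))

lemma Continuous.integrableOn_of_subset_cubeO {E : Type*} [NormedAddCommGroup E] {f : X3 → E}
    (hf : Continuous f) {Ys : Set X3} (hYs : Ys ⊆ cubeO) : IntegrableOn f Ys := by
  refine (hf.continuousOn.integrableOn_compact (isCompact_Icc (a := 0) (b := 1))).mono_set
    (hYs.trans ?_)
  exact fun y hy => ⟨fun i => (hy i).1.le, fun i => (hy i).2.le⟩

lemma integral_double_sum {α ι : Type*} [MeasurableSpace α] {μ : Measure α} [Fintype ι]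
    (c : ι → ι → ℝ) {f : ι → ι → α → ℝ} (hf : ∀ i j, Integrable (f i j) μ) :
    ∫ y, ∑ i, ∑ j, c i j * f i j y ∂μ = ∑ i, ∑ j, c i j * ∫ y, f i j y ∂μ := by
  rw [integral_finsetSum _ fun i _ => integrable_finsetSum _ fun j _ => (hf i j).const_mul _]
  refine sum_congr rfl fun i _ => ?_
  rw [integral_finsetSum _ fun j _ => (hf i j).const_mul _]
  simp only [integral_const_mul]

lemma integral_quadratic_sum {α ι : Type*} [MeasurableSpace α] {μ : Measure α} [Fintype ι]
    (ζ : ι → ι → ℝ) {f : ι → ι → ι → ι → α → ℝ} (hf : ∀ i j k l, Integrable (f i j k l) μ) :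
    ∫ y, ∑ i, ∑ j, ζ i j * ∑ k, ∑ l, ζ k l * f i j k l y ∂μ =
      ∑ i, ∑ j, ζ i j * ∑ k, ∑ l, ζ k l * ∫ y, f i j k l y ∂μ := by
  rw [integral_double_sum ζ fun i j => integrable_finsetSum _ fun k _ =>
    integrable_finsetSum _ fun l _ => (hf i j k l).const_mul _]
  simp only [integral_double_sum ζ (hf _ _)]

lemma Continuous.matInner {α : Type*} [TopologicalSpace α] {f g : α → Fin 3 → Fin 3 → ℝ}
    (hf : Continuous f) (hg : Continuous g) : Continuous fun y => matInner (f y) (g y) := by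
  unfold _root_.matInner
  fun_prop

lemma matInner_integral {α : Type*} [MeasurableSpace α] {μ : Measure α}
    {F : α → Fin 3 → Fin 3 → ℝ} (hF : Integrable F μ) (B : Fin 3 → Fin 3 → ℝ) :
    matInner (∫ y, F y ∂μ) B = ∫ y, matInner (F y) B ∂μ :=
  ((LinearMap.toContinuousLinearMap (matInnerₗ.flip B)).integral_comp_comm hF).symm

/-- The cell identity (5.31). -/
def CellIdentity (Ys : Set X3) (κ : ℝ) (U : Fin 3 → Fin 3 → X3 → X3)
    (P : Fin 3 → Fin 3 → X3 → ℝ) : Prop :=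
  ∀ i j k l : Fin 3,
    ∫ y in Ys, matInner (symGrad (U i j) y) (Jmat k l) =
      -(∫ y in Ys, matInner (symGrad (U i j) y) (symGrad (U k l) y)) -
        κ * ∫ y in Ys, P i j y * P k l y

section CellProblem

variable {Ys : Set X3} {κ : ℝ} {U : Fin 3 → Fin 3 → X3 → X3} {P : Fin 3 → Fin 3 → X3 → ℝ}

/-- (5.31) summed against the weights `ζ_{ij} ζ_{kl}`, using `ζ = Σ_{k,l} ζ_{kl} J^{kl}`. -/
lemma integral_symGrad_weightedSum_inner_eq (hYs : Ys ⊆ cubeO)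
    (hU : ∀ i j, ContDiff ℝ 1 (U i j)) (hP : ∀ i j, MemLp (P i j) 2 (volume.restrict cubeO))
    (hcell : CellIdentity Ys κ U P) {ζ : Fin 3 → Fin 3 → ℝ} (hζ : ∀ p q, ζ p q = ζ q p) :
    ∫ y in Ys, matInner (symGrad (weightedSum ζ U) y) ζ =
      -(∫ y in Ys, matInner (symGrad (weightedSum ζ U) y) (symGrad (weightedSum ζ U) y)) -
        κ * ∫ y in Ys, (∑ i, ∑ j, ζ i j * P i j y) ^ 2 := by
  unfold CellIdentity at hcell
  have hD := symGrad_weightedSum ζ fun i j => (hU i j).differentiable one_ne_zero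
  have hDJ : ∀ y, matInner (symGrad (weightedSum ζ U) y) ζ =
      ∑ i, ∑ j, ζ i j * ∑ k, ∑ l, ζ k l * matInner (symGrad (U i j) y) (Jmat k l) := fun y =>
    calc _ = matInnerₗ (∑ i, ∑ j, ζ i j • symGrad (U i j) y) (∑ k, ∑ l, ζ k l • Jmat k l) := by
          rw [hD, sum_smul_Jmat hζ, matInnerₗ_apply]
      _ = _ := LinearMap.map₂_sum_sum_smul _ _ _ _
  have hDD : ∀ y, matInner (symGrad (weightedSum ζ U) y) (symGrad (weightedSum ζ U) y) =
      ∑ i, ∑ j, ζ i j * ∑ k, ∑ l, ζ k l * matInner (symGrad (U i j) y) (symGrad (U k l) y) :=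
    fun y => by rw [hD, ← matInnerₗ_apply, LinearMap.map₂_sum_sum_smul]; rfl
  have hPP : ∀ y, (∑ i, ∑ j, ζ i j * P i j y) ^ 2 =
      ∑ i, ∑ j, ζ i j * ∑ k, ∑ l, ζ k l * (P i j y * P k l y) := fun y => by
    rw [sq]
    exact LinearMap.map₂_sum_sum_smul (LinearMap.mul ℝ ℝ) ζ (fun i j => P i j y)
      (fun i j => P i j y)
  have hcont : ∀ i j, Continuous (symGrad (U i j)) := fun i j => continuous_symGrad (hU i j)
  have hYs' : volume.restrict Ys ≤ volume.restrict cubeO := Measure.restrict_mono hYs le_rfl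
  simp only [hDJ, hDD, hPP]
  rw [integral_quadratic_sum ζ fun i j k l =>
      ((hcont i j).matInner continuous_const).integrableOn_of_subset_cubeO hYs,
    integral_quadratic_sum ζ fun i j k l =>
      ((hcont i j).matInner (hcont k l)).integrableOn_of_subset_cubeO hYs,
    integral_quadratic_sum ζ (f := fun i j k l y => P i j y * P k l y) fun i j k l =>
      ((hP i j).mono_measure hYs').integrable_mul ((hP k l).mono_measure hYs')]
  simp only [hcell, mul_sub, mul_neg, sum_sub_distrib, sum_neg_distrib, mul_sum, mul_left_comm _ κ]

lemma homogenized_eq_add_integral_symGrad (hYs : Ys ⊆ cubeO) (hU : ∀ i j, ContDiff ℝ 1 (U i j))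
    (ζ : Fin 3 → Fin 3 → ℝ) :
    (fun p q => ζ p q + ∑ i, ∑ j, ζ i j * ∫ y in Ys, symGrad (U i j) y p q) =
      ζ + ∫ y in Ys, symGrad (weightedSum ζ U) y := by
  have hint : IntegrableOn (symGrad (weightedSum ζ U)) Ys :=
    (continuous_symGrad (contDiff_weightedSum ζ hU)).integrableOn_of_subset_cubeO hYs
  ext p q
  rw [Pi.add_apply, Pi.add_apply, eval_integral hint.eval, eval_integral (hint.eval p).eval,
    ← integral_double_sum ζ fun i j =>
      ((continuous_apply_apply p q).comp (continuous_symGrad (hU i j))).integrableOn_of_subset_cubeO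
        (f := fun y => symGrad (U i j) y p q) hYs]
  simp only [symGrad_weightedSum ζ fun i j => (hU i j).differentiable one_ne_zero,
    Finset.sum_apply, Pi.smul_apply, smul_eq_mul]

lemma homogenized_inner_self_eq (hYs : Ys ⊆ cubeO) (hU : ∀ i j, ContDiff ℝ 1 (U i j))
    (hP : ∀ i j, MemLp (P i j) 2 (volume.restrict cubeO)) (hcell : CellIdentity Ys κ U P)
    {ζ : Fin 3 → Fin 3 → ℝ} (hζ : ∀ p q, ζ p q = ζ q p) :
    matInner (fun p q => ζ p q + ∑ i, ∑ j, ζ i j * ∫ y in Ys, symGrad (U i j) y p q) ζ =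
      (1 - (volume Ys).toReal) * matInner ζ ζ +
        (∫ y in Ys, matInner (symGrad (weightedSum ζ U) y + ζ) (symGrad (weightedSum ζ U) y + ζ)) +
        κ * ∫ y in Ys, (∑ i, ∑ j, ζ i j * P i j y) ^ 2 := by
  have hDZζ := integral_symGrad_weightedSum_inner_eq hYs hU hP hcell hζ
  set DZ := symGrad (weightedSum ζ U)
  have hDZcont : Continuous DZ := continuous_symGrad (contDiff_weightedSum ζ hU)
  have hDZint : IntegrableOn DZ Ys := hDZcont.integrableOn_of_subset_cubeO hYs
  have hsq : ∫ y in Ys, matInner (DZ y + ζ) (DZ y + ζ) =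
      (∫ y in Ys, matInner (DZ y) (DZ y)) + 2 * (∫ y in Ys, matInner (DZ y) ζ) +
        (volume Ys).toReal * matInner ζ ζ := by
    have hDD := (hDZcont.matInner hDZcont).integrableOn_of_subset_cubeO hYs
    have hDζ := (hDZcont.matInner (continuous_const (y := ζ))).integrableOn_of_subset_cubeO hYs
    have hζζ := (continuous_const (y := matInner ζ ζ)).integrableOn_of_subset_cubeO hYs
    have hsum : IntegrableOn (fun y => matInner (DZ y) (DZ y) + 2 * matInner (DZ y) ζ) Ys :=
      hDD.add (hDζ.const_mul 2)
    simp only [matInner_add_self]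
    rw [integral_add hsum hζζ, integral_add hDD (hDζ.const_mul 2), integral_const_mul,
      setIntegral_const, smul_eq_mul]
    rfl
  rw [homogenized_eq_add_integral_symGrad hYs hU, matInner_add_left, matInner_integral hDZint, hsq]
  linarith

end CellProblem

theorem homogenized_tensor_coercive_general
    (Ys : Set X3) (hYsub : Ys ⊆ cubeO)
    (κ : ℝ) (hκ : 0 ≤ κ)
    (U : Fin 3 → Fin 3 → X3 → X3)
    (hU : ∀ i j, ContDiff ℝ 1 (U i j))
    (P : Fin 3 → Fin 3 → X3 → ℝ)
    (hP : ∀ i j, MemLp (P i j) 2 (volume.restrict cubeO))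
    (hcell : ∀ i j k l : Fin 3,
      ∫ y in Ys, matInner (symGrad (U i j) y) (Jmat k l) =
        -(∫ y in Ys, matInner (symGrad (U i j) y) (symGrad (U k l) y)) -
          κ * ∫ y in Ys, P i j y * P k l y) :
    (∀ ζ : Fin 3 → Fin 3 → ℝ, (∀ p q, ζ p q = ζ q p) →
      matInner (fun p q => ζ p q + ∑ i, ∑ j, ζ i j * ∫ y in Ys, symGrad (U i j) y p q)
          ζ =
        (1 - (volume Ys).toReal) * matInner ζ ζ +
          (∫ y in Ys,
            matInner
              (fun p q => symGrad (fun z r => ∑ i, ∑ j, ζ i j * U i j z r) y p q + ζ p q)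
              (fun p q => symGrad (fun z r => ∑ i, ∑ j, ζ i j * U i j z r) y p q + ζ p q)) +
          κ * ∫ y in Ys, (∑ i, ∑ j, ζ i j * P i j y) ^ 2) ∧
    ((volume Ys).toReal < 1 →
      ∀ ζ : Fin 3 → Fin 3 → ℝ, (∀ p q, ζ p q = ζ q p) →
        (1 - (volume Ys).toReal) * matInner ζ ζ ≤
          matInner
            (fun p q => ζ p q + ∑ i, ∑ j, ζ i j * ∫ y in Ys, symGrad (U i j) y p q)
            ζ) := by
  have hid := fun (ζ : Fin 3 → Fin 3 → ℝ) (hζ : ∀ p q, ζ p q = ζ q p) =>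
    homogenized_inner_self_eq hYsub hU hP hcell hζ
  refine ⟨hid, fun _ ζ hζ => ?_⟩
  rw [hid ζ hζ]
  exact le_add_of_le_of_nonneg
    (le_add_of_nonneg_right (integral_nonneg fun y => matInner_self_nonneg _))
    (mul_nonneg hκ (integral_nonneg fun y => sq_nonneg _))

/-- **Coercivity of the homogenized elasticity tensor `A₀ˢ`** (claim in Lemma 5.7 via
identity (5.31)): with `A₀(ζ) = ζ + Σ_{ij} ζ_{ij} ∫_{Ys} D(U^{ij})`,
`Z_ζ = Σ_{ij} ζ_{ij} U^{ij}` and `Π_ζ = Σ_{ij} ζ_{ij} Π^{ij}`, one has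
`A₀(ζ) : ζ = (1 − |Ys|)(ζ : ζ) + ∫_{Ys} |D(Z_ζ) + ζ|² + κ ∫_{Ys} Π_ζ²`; in
particular `A₀(ζ) : ζ ≥ (1 − |Ys|)(ζ : ζ)` when `|Ys| < 1`. -/
theorem homogenized_tensor_coercive
    (Ys : Set X3) (hYsub : Ys ⊆ cubeO) (hYmeas : MeasurableSet Ys)
    (κ : ℝ) (hκ : 0 ≤ κ)
    (U : Fin 3 → Fin 3 → X3 → X3)
    (hU : ∀ i j, ContDiff ℝ 1 (U i j))
    (hUsym : ∀ i j, U i j = U j i)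
    (P : Fin 3 → Fin 3 → X3 → ℝ)
    (hP : ∀ i j, MemLp (P i j) 2 (volume.restrict cubeO))
    (hPsym : ∀ i j, P i j = P j i)
    (hcell : ∀ i j k l : Fin 3,
      ∫ y in Ys, matInner (symGrad (U i j) y) (Jmat k l) =
        -(∫ y in Ys, matInner (symGrad (U i j) y) (symGrad (U k l) y)) -
          κ * ∫ y in Ys, P i j y * P k l y) :
    (∀ ζ : Fin 3 → Fin 3 → ℝ, (∀ p q, ζ p q = ζ q p) →
      matInner (fun p q => ζ p q + ∑ i, ∑ j, ζ i j * ∫ y in Ys, symGrad (U i j) y p q)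
          ζ =
        (1 - (volume Ys).toReal) * matInner ζ ζ +
          (∫ y in Ys,
            matInner
              (fun p q => symGrad (fun z r => ∑ i, ∑ j, ζ i j * U i j z r) y p q + ζ p q)
              (fun p q => symGrad (fun z r => ∑ i, ∑ j, ζ i j * U i j z r) y p q + ζ p q)) +
          κ * ∫ y in Ys, (∑ i, ∑ j, ζ i j * P i j y) ^ 2) ∧
    ((volume Ys).toReal < 1 →
      ∀ ζ : Fin 3 → Fin 3 → ℝ, (∀ p q, ζ p q = ζ q p) →
        (1 - (volume Ys).toReal) * matInner ζ ζ ≤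
          matInner
            (fun p q => ζ p q + ∑ i, ∑ j, ζ i j * ∫ y in Ys, symGrad (U i j) y p q)
            ζ) :=
  homogenized_tensor_coercive_general Ys hYsub κ hκ U hU P hP hcell
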